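/- If R is a {0,1}-valued random variable with P(R=1 | X^m, X^o, A) = P(R=1 | X^o, A) a.s., then for any integrable real-valued function ψ of (X^o, X^m), the random variable R·ψ(X^o,X^m) + (1−R)·E[ψ(X^o,X^m) | X^o, A] has the same expectation as ψ(X^o,X^m). -/

import Mathlib

/-!
Multiplying by `ψ` (which is `σ(Xᵐ, Xᵒ, A)`-measurable) and conditioning on the full data turns
`E[R ψ]` into `E[P(R = 1 | Xᵐ, Xᵒ, A) ψ]`, which MAR lets us replace by `E[P(R = 1 | Xᵒ, A) ψ]`.
Conditional expectation is self-adjoint, so this equals `E[R · E[ψ | Xᵒ, A]]`. Hence the two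
estimating functions `R ψ + (1 - R) E[ψ | Xᵒ, A]` and `E[ψ | Xᵒ, A]` have the same mean, which is
`E[ψ]` by the tower property.
-/

open MeasureTheory

namespace MeasureTheory

variable {Ω : Type*} {m mObs mFull m₀ : MeasurableSpace Ω} {μ : Measure Ω}

theorem integral_mul_condExp_of_stronglyMeasurable (hm : m ≤ m₀) [SigmaFinite (μ.trim hm)]
    {f g : Ω → ℝ} (hg : StronglyMeasurable[m] g) (hgf : Integrable (fun ω => g ω * f ω) μ)
    (hf : Integrable f μ) :
    ∫ ω, g ω * μ[f | m] ω ∂μ = ∫ ω, g ω * f ω ∂μ := by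
  rw [← integral_condExp hm (f := fun ω => g ω * f ω)]
  exact integral_congr_ae (condExp_mul_of_stronglyMeasurable_left hg hgf hf).symm

theorem Integrable.mul_condExp_of_ae_bdd {f R : Ω → ℝ} {C : ℝ}
    (hf : Integrable f μ) (hRb : ∀ᵐ ω ∂μ, |R ω| ≤ C) :
    Integrable (fun ω => f ω * μ[R | m] ω) μ := by
  by_cases hm : m ≤ m₀
  · exact hf.mul_bdd (stronglyMeasurable_condExp.mono hm).aestronglyMeasurable
      (ae_bdd_abs_condExp_of_ae_bdd_abs hRb)
  · simp [condExp_of_not_le hm]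

variable [IsFiniteMeasure μ]

theorem integral_condExp_mul_eq_integral_mul_condExp (hm : m ≤ m₀) {f R : Ω → ℝ} {C : ℝ}
    (hf : Integrable f μ) (hR : AEStronglyMeasurable R μ) (hRb : ∀ᵐ ω ∂μ, |R ω| ≤ C) :
    ∫ ω, μ[f | m] ω * R ω ∂μ = ∫ ω, f ω * μ[R | m] ω ∂μ := by
  have hR_int : Integrable R μ := .of_bound hR C hRb
  calc ∫ ω, μ[f | m] ω * R ω ∂μ
      = ∫ ω, μ[f | m] ω * μ[R | m] ω ∂μ :=
        (integral_mul_condExp_of_stronglyMeasurable hm stronglyMeasurable_condExp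
          (integrable_condExp.mul_bdd hR hRb)
          hR_int).symm
    _ = ∫ ω, μ[R | m] ω * f ω ∂μ := by
        simp_rw [mul_comm (μ[f | m] _)]
        exact integral_mul_condExp_of_stronglyMeasurable hm stronglyMeasurable_condExp
          (by simpa only [mul_comm] using hf.mul_condExp_of_ae_bdd hRb) hf
    _ = ∫ ω, f ω * μ[R | m] ω ∂μ := by simp_rw [mul_comm]

variable {g R : Ω → ℝ} {C : ℝ}

theorem integral_mul_eq_integral_mul_condExp_of_condExp_ae_eq (hObs : mObs ≤ m₀)
    (hFull : mFull ≤ m₀) (hg : StronglyMeasurable[mFull] g) (hg_int : Integrable g μ)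
    (hR : AEStronglyMeasurable R μ) (hRb : ∀ᵐ ω ∂μ, |R ω| ≤ C)
    (hRcond : μ[R | mFull] =ᵐ[μ] μ[R | mObs]) :
    ∫ ω, R ω * g ω ∂μ = ∫ ω, R ω * μ[g | mObs] ω ∂μ := by
  have hR_int : Integrable R μ := .of_bound hR C hRb
  calc ∫ ω, R ω * g ω ∂μ
      = ∫ ω, g ω * μ[R | mFull] ω ∂μ := by
        simp_rw [mul_comm (R _)]
        exact (integral_mul_condExp_of_stronglyMeasurable hFull hg
          (hg_int.mul_bdd hR hRb) hR_int).symm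
    _ = ∫ ω, g ω * μ[R | mObs] ω ∂μ :=
        integral_congr_ae (hRcond.mono fun ω hω => by simp only [hω])
    _ = ∫ ω, R ω * μ[g | mObs] ω ∂μ := by
        rw [← integral_condExp_mul_eq_integral_mul_condExp hObs hg_int hR hRb]
        simp_rw [mul_comm]

theorem integral_mul_add_one_sub_mul_condExp_of_condExp_ae_eq (hObs : mObs ≤ m₀)
    (hFull : mFull ≤ m₀) (hg : StronglyMeasurable[mFull] g) (hg_int : Integrable g μ)
    (hR : AEStronglyMeasurable R μ) (hRb : ∀ᵐ ω ∂μ, |R ω| ≤ C)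
    (hRcond : μ[R | mFull] =ᵐ[μ] μ[R | mObs]) :
    ∫ ω, (R ω * g ω + (1 - R ω) * μ[g | mObs] ω) ∂μ = ∫ ω, g ω ∂μ := by
  have hRg : Integrable (fun ω => R ω * g ω) μ :=
    hg_int.bdd_mul hR hRb
  have hRh : Integrable (fun ω => R ω * μ[g | mObs] ω) μ :=
    integrable_condExp.bdd_mul hR hRb
  calc ∫ ω, (R ω * g ω + (1 - R ω) * μ[g | mObs] ω) ∂μ
      = ∫ ω, (R ω * g ω - R ω * μ[g | mObs] ω + μ[g | mObs] ω) ∂μ := by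
        congr 1 with ω; ring
    _ = ∫ ω, μ[g | mObs] ω ∂μ := by
        have hdiff : Integrable (fun ω => R ω * g ω - R ω * μ[g | mObs] ω) μ := hRg.sub hRh
        rw [integral_add hdiff integrable_condExp, integral_sub hRg hRh,
          integral_mul_eq_integral_mul_condExp_of_condExp_ae_eq hObs hFull hg hg_int hR hRb
            hRcond, sub_self, zero_add]
    _ = ∫ ω, g ω ∂μ := integral_condExp hObs

end MeasureTheory

theorem mar_expected_estimating_function_unbiased_general
    {Ω E F G : Type*} [m0 : MeasurableSpace Ω]
    [MeasurableSpace E] [MeasurableSpace F] [MeasurableSpace G]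
    (μ : Measure Ω) [IsProbabilityMeasure μ]
    (Xm : Ω → E) (Xo : Ω → F) (A : Ω → G) (R : Ω → ℝ)
    (hR : Measurable R) (hR01 : ∀ ω, R ω = 0 ∨ R ω = 1)
    (mFull mObs : MeasurableSpace Ω)
    (hmFull : mFull = MeasurableSpace.comap (fun ω => (Xm ω, Xo ω, A ω)) inferInstance)
    (hFull_le : mFull ≤ m0) (hObs_le : mObs ≤ m0)
    -- MAR: P(R=1 | Xᵐ, Xᵒ, A) = P(R=1 | Xᵒ, A) a.s.
    (hMAR : μ[Set.indicator {ω | R ω = 1} (fun _ => (1 : ℝ)) | mFull]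
      =ᵐ[μ] μ[Set.indicator {ω | R ω = 1} (fun _ => (1 : ℝ)) | mObs])
    (ψ : F × E → ℝ) (hψ : Measurable ψ)
    (hint : Integrable (fun ω => ψ (Xo ω, Xm ω)) μ) :
    ∫ ω, (R ω * ψ (Xo ω, Xm ω)
        + (1 - R ω) * (μ[fun ω' => ψ (Xo ω', Xm ω') | mObs]) ω) ∂μ
      = ∫ ω, ψ (Xo ω, Xm ω) ∂μ := by
  have hR_indicator : Set.indicator {ω | R ω = 1} (fun _ => (1 : ℝ)) = R := by
    ext ω
    rcases hR01 ω with h | h <;> simp [h]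
  have hR_bdd : ∀ᵐ ω ∂μ, |R ω| ≤ 1 :=
    .of_forall fun ω => by rcases hR01 ω with h | h <;> simp [h]
  have hψ_full : StronglyMeasurable[mFull] fun ω => ψ (Xo ω, Xm ω) := by
    have hdata : Measurable[mFull] fun ω => (Xm ω, Xo ω, A ω) :=
      hmFull ▸ comap_measurable _
    exact (hψ.comp ((measurable_snd.fst.prodMk measurable_fst).comp hdata)).stronglyMeasurable
  rw [hR_indicator] at hMAR
  exact integral_mul_add_one_sub_mul_condExp_of_condExp_ae_eq hObs_le hFull_le hψ_full hint
    hR.aestronglyMeasurable hR_bdd hMAR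

/-- **Unbiasedness of the expected estimating function under MAR.** If `R` is a
`{0,1}`-valued random variable with `P(R=1 | Xᵐ, Xᵒ, A) = P(R=1 | Xᵒ, A)` a.s., then
for any measurable `ψ` with `ψ(Xᵒ, Xᵐ)` integrable, the random variable
`R·ψ(Xᵒ,Xᵐ) + (1−R)·E[ψ(Xᵒ,Xᵐ) | Xᵒ, A]` has the same expectation as `ψ(Xᵒ,Xᵐ)`. -/
theorem mar_expected_estimating_function_unbiased
    {Ω E F G : Type*} [m0 : MeasurableSpace Ω]
    [MeasurableSpace E] [MeasurableSpace F] [MeasurableSpace G]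
    (μ : Measure Ω) [IsProbabilityMeasure μ]
    (Xm : Ω → E) (Xo : Ω → F) (A : Ω → G) (R : Ω → ℝ)
    (hXm : Measurable Xm) (hXo : Measurable Xo) (hA : Measurable A)
    (hR : Measurable R) (hR01 : ∀ ω, R ω = 0 ∨ R ω = 1)
    (mFull mObs : MeasurableSpace Ω)
    (hmFull : mFull = MeasurableSpace.comap (fun ω => (Xm ω, Xo ω, A ω)) inferInstance)
    (hmObs : mObs = MeasurableSpace.comap (fun ω => (Xo ω, A ω)) inferInstance)
    (hFull_le : mFull ≤ m0) (hObs_le : mObs ≤ m0)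
    -- MAR: P(R=1 | Xᵐ, Xᵒ, A) = P(R=1 | Xᵒ, A) a.s.
    (hMAR : μ[Set.indicator {ω | R ω = 1} (fun _ => (1 : ℝ)) | mFull]
      =ᵐ[μ] μ[Set.indicator {ω | R ω = 1} (fun _ => (1 : ℝ)) | mObs])
    (ψ : F × E → ℝ) (hψ : Measurable ψ)
    (hint : Integrable (fun ω => ψ (Xo ω, Xm ω)) μ) :
    ∫ ω, (R ω * ψ (Xo ω, Xm ω)
        + (1 - R ω) * (μ[fun ω' => ψ (Xo ω', Xm ω') | mObs]) ω) ∂μ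
      = ∫ ω, ψ (Xo ω, Xm ω) ∂μ :=
  mar_expected_estimating_function_unbiased_general (m0 := m0) μ Xm Xo A R hR hR01 mFull mObs hmFull
    hFull_le hObs_le hMAR ψ hψ hint
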